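/- arXiv:0806.2926 — 6 statements merged into one kernel-verified Lean document; each statement's English description precedes it below -/
import Mathlib

section
/- Let T, S : L¹(μ) → L¹(μ) be positive contractions with T ≤ S. If there exists n₀ ∈ ℕ such that ‖S^{n₀} − T^{n₀}‖ < 1, then ‖Sⁿ − Tⁿ‖ < 1 for every n ≥ n₀. -/
set_option maxHeartbeats 1000000


open MeasureTheory

namespace NormPowSubPowAux

variable {X : Type*} [MeasurableSpace X] {μ : Measure X}

/-- The integral functional on `L¹`. -/
noncomputable def I (f : Lp ℝ 1 μ) : ℝ := ∫ a, f a ∂μ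

lemma I_add (f g : Lp ℝ 1 μ) : I (f + g) = I f + I g := by
  unfold I
  rw [integral_congr_ae (Lp.coeFn_add f g)]
  exact integral_add (L1.integrable_coeFn f) (L1.integrable_coeFn g)

lemma I_sub (f g : Lp ℝ 1 μ) : I (f - g) = I f - I g := by
  unfold I
  rw [integral_congr_ae (Lp.coeFn_sub f g)]
  exact integral_sub (L1.integrable_coeFn f) (L1.integrable_coeFn g)

lemma I_nonneg {f : Lp ℝ 1 μ} (hf : 0 ≤ f) : 0 ≤ I f :=
  integral_nonneg_of_ae ((Lp.coeFn_nonneg f).mpr hf)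

lemma norm_eq_I {f : Lp ℝ 1 μ} (hf : 0 ≤ f) : ‖f‖ = I f := by
  rw [L1.norm_eq_integral_norm]
  refine integral_congr_ae ?_
  filter_upwards [(Lp.coeFn_nonneg f).mpr hf] with a ha
  exact Real.norm_of_nonneg ha

lemma I_le_norm (f : Lp ℝ 1 μ) : I f ≤ ‖f‖ := by
  rw [L1.norm_eq_integral_norm]
  refine integral_mono (L1.integrable_coeFn f) (L1.integrable_coeFn f).norm ?_
  intro a
  exact le_abs_self _

lemma contraction_apply {T : Lp ℝ 1 μ →L[ℝ] Lp ℝ 1 μ} (hT : ‖T‖ ≤ 1) (x : Lp ℝ 1 μ) :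
    ‖T x‖ ≤ ‖x‖ := by
  calc ‖T x‖ ≤ ‖T‖ * ‖x‖ := T.le_opNorm x
    _ ≤ 1 * ‖x‖ := mul_le_mul_of_nonneg_right hT (norm_nonneg x)
    _ = ‖x‖ := one_mul _

lemma pow_contraction_apply {T : Lp ℝ 1 μ →L[ℝ] Lp ℝ 1 μ} (hT : ‖T‖ ≤ 1) (n : ℕ)
    (x : Lp ℝ 1 μ) : ‖(T ^ n) x‖ ≤ ‖x‖ := by
  induction n with
  | zero => simp
  | succ n ih =>
    rw [pow_succ', ContinuousLinearMap.mul_apply]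
    exact (contraction_apply hT _).trans ih

lemma pow_pos {T : Lp ℝ 1 μ →L[ℝ] Lp ℝ 1 μ} (hT : ∀ x : Lp ℝ 1 μ, 0 ≤ x → 0 ≤ T x)
    (n : ℕ) {x : Lp ℝ 1 μ} (hx : 0 ≤ x) : 0 ≤ (T ^ n) x := by
  induction n with
  | zero => simpa using hx
  | succ n ih =>
    rw [pow_succ', ContinuousLinearMap.mul_apply]
    exact hT _ ih

lemma diff_pow_pos {T S : Lp ℝ 1 μ →L[ℝ] Lp ℝ 1 μ}
    (hT : ∀ x : Lp ℝ 1 μ, 0 ≤ x → 0 ≤ T x)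
    (hS : ∀ x : Lp ℝ 1 μ, 0 ≤ x → 0 ≤ S x)
    (hTS : ∀ x : Lp ℝ 1 μ, 0 ≤ x → 0 ≤ S x - T x)
    (n : ℕ) {x : Lp ℝ 1 μ} (hx : 0 ≤ x) : 0 ≤ (S ^ n - T ^ n) x := by
  induction n with
  | zero => simp
  | succ n ih =>
    have e : S ^ (n + 1) - T ^ (n + 1) = S * (S ^ n - T ^ n) + (S - T) * T ^ n := by
      rw [pow_succ', pow_succ']; noncomm_ring
    rw [e, ContinuousLinearMap.add_apply, ContinuousLinearMap.mul_apply,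
      ContinuousLinearMap.mul_apply]
    exact add_nonneg (hS _ ih) (by simpa using hTS _ (pow_pos hT n hx))

lemma I_pow_le {T : Lp ℝ 1 μ →L[ℝ] Lp ℝ 1 μ} (hT : ∀ x : Lp ℝ 1 μ, 0 ≤ x → 0 ≤ T x)
    (hTnorm : ‖T‖ ≤ 1) {x : Lp ℝ 1 μ} (hx : 0 ≤ x) :
    ∀ n, 1 ≤ n → I ((T ^ n) x) ≤ I (T x) := by
  refine Nat.le_induction ?_ ?_
  · rw [pow_one]
  · intro n hn ih
    refine le_trans ?_ ih
    rw [pow_succ', ContinuousLinearMap.mul_apply]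
    calc I (T ((T^n) x)) ≤ ‖T ((T^n) x)‖ := I_le_norm _
      _ ≤ ‖(T^n) x‖ := contraction_apply hTnorm _
      _ = I ((T^n) x) := norm_eq_I (pow_pos hT n hx)

lemma key_step {T S : Lp ℝ 1 μ →L[ℝ] Lp ℝ 1 μ}
    (hT : ∀ x : Lp ℝ 1 μ, 0 ≤ x → 0 ≤ T x) (hTnorm : ‖T‖ ≤ 1)
    (hS : ∀ x : Lp ℝ 1 μ, 0 ≤ x → 0 ≤ S x) (hSnorm : ‖S‖ ≤ 1)
    (hTS : ∀ x : Lp ℝ 1 μ, 0 ≤ x → 0 ≤ S x - T x)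
    (n : ℕ) (hn : 1 ≤ n) (h : ‖S ^ n - T ^ n‖ < 1) :
    ‖S ^ (n + 1) - T ^ (n + 1)‖ < 1 := by
  set Δ := ‖S ^ n - T ^ n‖ with hΔdef
  have hΔ0 : 0 ≤ Δ := norm_nonneg _
  set ε : ℝ := 1 - Δ with hεdef
  have hε0 : 0 < ε := by simp only [hεdef]; linarith
  set C : ℝ := (1 + ε * Δ) / (1 + ε) with hCdef
  have hden : (0:ℝ) < 1 + ε := by linarith
  have hC1 : C < 1 := by
    rw [hCdef, div_lt_one hden]
    nlinarith
  have hC0 : 0 ≤ C := by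
    apply div_nonneg _ hden.le
    nlinarith
  have hpos : ∀ x : Lp ℝ 1 μ, 0 ≤ x → ‖(S ^ (n + 1) - T ^ (n + 1)) x‖ ≤ C * ‖x‖ := by
    intro x hx
    set t := I (T x) with htdef
    have ht0 : 0 ≤ t := I_nonneg (hT x hx)
    -- decomposition 1 : S^{n+1} - T^{n+1} = S (Sⁿ - Tⁿ) + (S - T) Tⁿ
    have e1 : (S ^ (n + 1) - T ^ (n + 1)) x
        = S ((S ^ n - T ^ n) x) + (S ((T ^ n) x) - T ((T ^ n) x)) := by
      have e : S ^ (n + 1) - T ^ (n + 1) = S * (S ^ n - T ^ n) + (S - T) * T ^ n := by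
        rw [pow_succ', pow_succ']; noncomm_ring
      rw [e]; simp [ContinuousLinearMap.add_apply, ContinuousLinearMap.mul_apply]
    -- decomposition 2 : S^{n+1} - T^{n+1} = Sⁿ (S - T) + (Sⁿ - Tⁿ) T
    have e2 : (S ^ (n + 1) - T ^ (n + 1)) x
        = (S ^ n) (S x - T x) + (S ^ n - T ^ n) (T x) := by
      have e : S ^ (n + 1) - T ^ (n + 1) = S ^ n * (S - T) + (S ^ n - T ^ n) * T := by
        rw [pow_succ, pow_succ]; noncomm_ring
      rw [e]; simp [ContinuousLinearMap.add_apply, ContinuousLinearMap.mul_apply]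
    -- bound 1 : I(D x) ≤ Δ ‖x‖ + t
    have b1 : I ((S ^ (n + 1) - T ^ (n + 1)) x) ≤ Δ * ‖x‖ + t := by
      rw [e1, I_add, I_sub]
      have h1 : I (S ((S ^ n - T ^ n) x)) ≤ Δ * ‖x‖ := by
        calc I (S ((S ^ n - T ^ n) x)) ≤ ‖S ((S ^ n - T ^ n) x)‖ := I_le_norm _
          _ ≤ ‖(S ^ n - T ^ n) x‖ := contraction_apply hSnorm _
          _ ≤ Δ * ‖x‖ := (S ^ n - T ^ n).le_opNorm x
      have h2 : I (S ((T ^ n) x)) ≤ t := by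
        calc I (S ((T ^ n) x)) ≤ ‖S ((T ^ n) x)‖ := I_le_norm _
          _ ≤ ‖(T ^ n) x‖ := contraction_apply hSnorm _
          _ = I ((T ^ n) x) := norm_eq_I (pow_pos hT n hx)
          _ ≤ t := I_pow_le hT hTnorm hx n hn
      have h3 : 0 ≤ I (T ((T ^ n) x)) := I_nonneg (hT _ (pow_pos hT n hx))
      linarith
    -- bound 2 : I(D x) ≤ ‖x‖ - ε t
    have b2 : I ((S ^ (n + 1) - T ^ (n + 1)) x) ≤ ‖x‖ - ε * t := by
      rw [e2, I_add]
      have h1 : I ((S ^ n) (S x - T x)) ≤ ‖x‖ - t := by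
        calc I ((S ^ n) (S x - T x)) ≤ ‖(S ^ n) (S x - T x)‖ := I_le_norm _
          _ ≤ ‖S x - T x‖ := pow_contraction_apply hSnorm n _
          _ = I (S x - T x) := norm_eq_I (hTS x hx)
          _ = I (S x) - t := I_sub _ _
          _ ≤ ‖S x‖ - t := by linarith [I_le_norm (S x)]
          _ ≤ ‖x‖ - t := by linarith [contraction_apply hSnorm x]
      have h2 : I ((S ^ n - T ^ n) (T x)) ≤ Δ * t := by
        calc I ((S ^ n - T ^ n) (T x)) ≤ ‖(S ^ n - T ^ n) (T x)‖ := I_le_norm _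
          _ ≤ Δ * ‖T x‖ := (S ^ n - T ^ n).le_opNorm _
          _ = Δ * t := by rw [norm_eq_I (hT x hx)]
      have : Δ * t = t - ε * t := by rw [hεdef]; ring
      linarith
    have hDx : 0 ≤ (S ^ (n + 1) - T ^ (n + 1)) x := diff_pow_pos hT hS hTS (n + 1) hx
    rw [norm_eq_I hDx, hCdef, div_mul_eq_mul_div, le_div_iff₀ hden]
    nlinarith [mul_le_mul_of_nonneg_left b1 hε0.le]
  refine lt_of_le_of_lt (ContinuousLinearMap.opNorm_le_bound _ hC0 ?_) hC1
  intro x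
  calc ‖(S ^ (n + 1) - T ^ (n + 1)) x‖
      = ‖(S ^ (n + 1) - T ^ (n + 1)) x⁺ - (S ^ (n + 1) - T ^ (n + 1)) x⁻‖ := by
        rw [← map_sub, posPart_sub_negPart]
    _ ≤ ‖(S ^ (n + 1) - T ^ (n + 1)) x⁺‖ + ‖(S ^ (n + 1) - T ^ (n + 1)) x⁻‖ := norm_sub_le _ _
    _ ≤ C * ‖x⁺‖ + C * ‖x⁻‖ :=
        add_le_add (hpos _ (posPart_nonneg x)) (hpos _ (negPart_nonneg x))
    _ = C * (I x⁺ + I x⁻) := by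
        rw [norm_eq_I (posPart_nonneg x), norm_eq_I (negPart_nonneg x)]; ring
    _ = C * I (x⁺ + x⁻) := by rw [I_add]
    _ = C * ‖|x|‖ := by rw [posPart_add_negPart, ← norm_eq_I (abs_nonneg x)]
    _ = C * ‖x‖ := by rw [norm_abs_eq_norm]

end NormPowSubPowAux

/-- Main theorem: if `T ≤ S` are positive contractions on the real `L¹`-space and
`‖S^{n₀} - T^{n₀}‖ < 1` for some `n₀ ≥ 1`, then `‖Sⁿ - Tⁿ‖ < 1` for all `n ≥ n₀`. -/
theorem norm_pow_sub_pow_lt_one_of_norm_pow_lt_one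
    {X : Type*} [MeasurableSpace X] (μ : Measure X)
    (T S : Lp ℝ 1 μ →L[ℝ] Lp ℝ 1 μ)
    (hT : ∀ x : Lp ℝ 1 μ, 0 ≤ x → 0 ≤ T x) (hTnorm : ‖T‖ ≤ 1)
    (hS : ∀ x : Lp ℝ 1 μ, 0 ≤ x → 0 ≤ S x) (hSnorm : ‖S‖ ≤ 1)
    (hTS : ∀ x : Lp ℝ 1 μ, 0 ≤ x → 0 ≤ S x - T x)
    (n₀ : ℕ) (hn₀ : 1 ≤ n₀) (h : ‖S ^ n₀ - T ^ n₀‖ < 1) :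
    ∀ n : ℕ, n₀ ≤ n → ‖S ^ n - T ^ n‖ < 1 := by
  refine Nat.le_induction h ?_
  intro n hn ih
  exact NormPowSubPowAux.key_step hT hTnorm hS hSnorm hTS n (hn₀.trans hn) ih
end

section
/- Let X be a partially ordered real Banach space such that the norm is additive on the positive cone and every element x decomposes as x = x⁺ − x⁻ with x⁺, x⁻ ≥ 0 and ‖x‖ = ‖x⁺‖ + ‖x⁻‖. Let T, S : X → X be positive contractions with S − T positive. If ‖S^{n₀} − T^{n₀}‖ < 1 for some n₀ ∈ ℕ, then ‖Sⁿ − Tⁿ‖ < 1 for every n ≥ n₀. -/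
/-- Main theorem in an abstract partially ordered real Banach space with additive norm on
the positive cone and positive decompositions: if `T ≤ S` are positive contractions and
`‖S^{n₀} - T^{n₀}‖ < 1` for some `n₀ ≥ 1`, then `‖Sⁿ - Tⁿ‖ < 1` for all `n ≥ n₀`. -/
theorem norm_pow_sub_pow_lt_one_of_norm_pow_lt_one_ordered
    {E : Type*} [NormedAddCommGroup E] [NormedSpace ℝ E] [CompleteSpace E]
    [PartialOrder E] [CovariantClass E E (· + ·) (· ≤ ·)]
    (hadd : ∀ x y : E, 0 ≤ x → 0 ≤ y → ‖x + y‖ = ‖x‖ + ‖y‖)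
    (hdecomp : ∀ x : E, ∃ p n : E, 0 ≤ p ∧ 0 ≤ n ∧ x = p - n ∧ ‖x‖ = ‖p‖ + ‖n‖)
    (T S : E →L[ℝ] E)
    (hT : ∀ x : E, 0 ≤ x → 0 ≤ T x) (hTnorm : ‖T‖ ≤ 1)
    (hS : ∀ x : E, 0 ≤ x → 0 ≤ S x) (hSnorm : ‖S‖ ≤ 1)
    (hTS : ∀ x : E, 0 ≤ x → 0 ≤ S x - T x)
    (n₀ : ℕ) (hn₀ : 1 ≤ n₀) (h : ‖S ^ n₀ - T ^ n₀‖ < 1) :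
    ∀ n : ℕ, n₀ ≤ n → ‖S ^ n - T ^ n‖ < 1 := by
  haveI : CovariantClass E E (Function.swap (· + ·)) (· ≤ ·) :=
    ⟨fun a b c h => by simpa [add_comm _ a] using add_le_add_left h a⟩
  obtain ⟨c, hceq⟩ : ∃ c, ‖S ^ n₀ - T ^ n₀‖ = c := ⟨_, rfl⟩
  have hc1 : c < 1 := hceq ▸ h
  have hc0 : (0:ℝ) ≤ c := hceq ▸ norm_nonneg _
  -- contractivity of powers
  have hSpow : ∀ (m : ℕ) (y : E), ‖(S ^ m) y‖ ≤ ‖y‖ := by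
    intro m
    induction m with
    | zero => intro y; simp
    | succ k ih =>
      intro y
      have e : (S ^ (k+1)) y = (S ^ k) (S y) := by
        rw [pow_succ, ContinuousLinearMap.mul_apply]
      rw [e]
      refine le_trans (ih (S y)) ?_
      have := S.le_opNorm y
      nlinarith [norm_nonneg y]
  have hTpow : ∀ (m : ℕ) (y : E), ‖(T ^ m) y‖ ≤ ‖y‖ := by
    intro m
    induction m with
    | zero => intro y; simp
    | succ k ih =>
      intro y
      have e : (T ^ (k+1)) y = (T ^ k) (T y) := by
        rw [pow_succ, ContinuousLinearMap.mul_apply]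
      rw [e]
      refine le_trans (ih (T y)) ?_
      have := T.le_opNorm y
      nlinarith [norm_nonneg y]
  -- positivity of powers and differences
  have hpos : ∀ (m : ℕ) (x : E), 0 ≤ x →
      0 ≤ (T ^ m) x ∧ 0 ≤ (S ^ m) x ∧ 0 ≤ (S ^ m) x - (T ^ m) x := by
    intro m
    induction m with
    | zero => intro x hx; simpa using hx
    | succ k ih =>
      intro x hx
      obtain ⟨h1, h2, h3⟩ := ih x hx
      have eT : (T ^ (k+1)) x = T ((T ^ k) x) := by
        rw [pow_succ', ContinuousLinearMap.mul_apply]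
      have eS : (S ^ (k+1)) x = S ((S ^ k) x) := by
        rw [pow_succ', ContinuousLinearMap.mul_apply]
      refine ⟨by rw [eT]; exact hT _ h1, by rw [eS]; exact hS _ h2, ?_⟩
      rw [eT, eS]
      have e : S ((S ^ k) x) - T ((T ^ k) x)
          = S ((S ^ k) x - (T ^ k) x) + (S ((T ^ k) x) - T ((T ^ k) x)) := by
        rw [map_sub]; abel
      rw [e]
      exact add_nonneg (hS _ h3) (hTS _ h1)
  -- additivity of norms for the standard split
  have EQsplit : ∀ (m k : ℕ) (x : E), 0 ≤ x →
      ‖(S ^ (m + k) - T ^ (m + k)) x‖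
        = ‖(S ^ m) ((S ^ k - T ^ k) x)‖ + ‖(S ^ m - T ^ m) ((T ^ k) x)‖ := by
    intro m k x hx
    obtain ⟨hTk, hSk, hDk⟩ := hpos k x hx
    have hDk' : 0 ≤ (S ^ k - T ^ k) x := by simpa using hDk
    have h1 : 0 ≤ (S ^ m) ((S ^ k - T ^ k) x) := (hpos m _ hDk').2.1
    have h2 : 0 ≤ (S ^ m - T ^ m) ((T ^ k) x) := by
      simpa using (hpos m _ hTk).2.2
    have e : (S ^ (m + k) - T ^ (m + k)) x
        = (S ^ m) ((S ^ k - T ^ k) x) + (S ^ m - T ^ m) ((T ^ k) x) := by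
      simp only [ContinuousLinearMap.sub_apply, map_sub, pow_add,
        ContinuousLinearMap.mul_apply]
      abel
    rw [e, hadd _ _ h1 h2]
  -- the basic norm identity on the cone
  have IDk : ∀ (k : ℕ) (x : E), 0 ≤ x →
      ‖(S ^ k) x‖ = ‖(T ^ k) x‖ + ‖(S ^ k - T ^ k) x‖ := by
    intro k x hx
    obtain ⟨h1, h2, h3⟩ := hpos k x hx
    have h3' : 0 ≤ (S ^ k - T ^ k) x := by simpa using h3
    have e : (S ^ k) x = (T ^ k) x + (S ^ k - T ^ k) x := by
      simp
    rw [e, hadd _ _ h1 h3']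
  -- main induction: cone bound with constant < 1
  have main : ∀ n : ℕ, n₀ ≤ n → ∃ C : ℝ, 0 ≤ C ∧ C < 1 ∧
      ∀ x : E, 0 ≤ x → ‖(S ^ n - T ^ n) x‖ ≤ C * ‖x‖ := by
    intro n
    induction n using Nat.strong_induction_on with
    | _ n IH =>
      intro hn
      set k := n - n₀ with hk
      have h2c : (0:ℝ) < 2 - c := by linarith
      by_cases hkle : k ≤ n₀
      · refine ⟨(1 + c - c^2) / (2 - c), ?_, ?_, ?_⟩
        · apply div_nonneg _ (le_of_lt h2c); nlinarith
        · rw [div_lt_one h2c]; nlinarith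
        · intro x hx
          have hA : ‖(S ^ n - T ^ n) x‖ ≤ ‖x‖ - (1 - c) * ‖(T ^ k) x‖ := by
            have e1 := EQsplit n₀ k x hx
            rw [show n₀ + k = n by omega] at e1
            have b1 : ‖(S ^ n₀) ((S ^ k - T ^ k) x)‖ ≤ ‖(S ^ k - T ^ k) x‖ := hSpow _ _
            have b2 : ‖(S ^ n₀ - T ^ n₀) ((T ^ k) x)‖ ≤ c * ‖(T ^ k) x‖ := by
              have := (S ^ n₀ - T ^ n₀).le_opNorm ((T ^ k) x)
              rw [hceq] at this; exact this
            have b3 : ‖(S ^ k - T ^ k) x‖ ≤ ‖x‖ - ‖(T ^ k) x‖ := by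
              have hid := IDk k x hx
              have := hSpow k x
              linarith
            linarith
          have hB : ‖(S ^ n - T ^ n) x‖ ≤ c * ‖x‖ + ‖(T ^ k) x‖ := by
            have e1 := EQsplit k n₀ x hx
            rw [show k + n₀ = n by omega] at e1
            have b1 : ‖(S ^ k) ((S ^ n₀ - T ^ n₀) x)‖ ≤ c * ‖x‖ := by
              refine le_trans (hSpow _ _) ?_
              have := (S ^ n₀ - T ^ n₀).le_opNorm x
              rw [hceq] at this; exact this
            have hTx : 0 ≤ (T ^ n₀) x := (hpos n₀ x hx).1
            have b2 : ‖(S ^ k - T ^ k) ((T ^ n₀) x)‖ ≤ ‖(T ^ n₀) x‖ := by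
              have hid := IDk k _ hTx
              have := hSpow k ((T ^ n₀) x)
              have := norm_nonneg ((T ^ k) ((T ^ n₀) x))
              linarith
            have b3 : ‖(T ^ n₀) x‖ ≤ ‖(T ^ k) x‖ := by
              have e2 : (T ^ n₀) x = (T ^ (n₀ - k)) ((T ^ k) x) := by
                rw [← ContinuousLinearMap.mul_apply, ← pow_add,
                  show n₀ - k + k = n₀ by omega]
              rw [e2]; exact hTpow _ _
            linarith
          rw [div_mul_eq_mul_div, le_div_iff₀ h2c]
          have ht0 := norm_nonneg ((T ^ k) x)
          have hx0 := norm_nonneg x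
          rcases le_or_gt ((2 - c) * ‖(T ^ k) x‖) ((1 - c) * ‖x‖) with h' | h'
          · nlinarith
          · nlinarith
      · have hk1 : k < n := by omega
        have hk2 : n₀ ≤ k := by omega
        obtain ⟨C, hC0, hC1, hCb⟩ := IH k hk1 hk2
        refine ⟨(1 - c) * C + c, by nlinarith, by nlinarith, ?_⟩
        intro x hx
        have e1 := EQsplit n₀ k x hx
        rw [show n₀ + k = n by omega] at e1
        have b1 : ‖(S ^ n₀) ((S ^ k - T ^ k) x)‖ ≤ ‖(S ^ k - T ^ k) x‖ := hSpow _ _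
        have b2 : ‖(S ^ n₀ - T ^ n₀) ((T ^ k) x)‖ ≤ c * ‖(T ^ k) x‖ := by
          have := (S ^ n₀ - T ^ n₀).le_opNorm ((T ^ k) x)
          rw [hceq] at this; exact this
        have b3 : ‖(T ^ k) x‖ = ‖(S ^ k) x‖ - ‖(S ^ k - T ^ k) x‖ := by
          have := IDk k x hx; linarith
        have b4 : ‖(S ^ k) x‖ ≤ ‖x‖ := hSpow _ _
        have b5 : ‖(S ^ k - T ^ k) x‖ ≤ C * ‖x‖ := hCb x hx
        nlinarith [norm_nonneg ((S ^ k - T ^ k) x), norm_nonneg x,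
          mul_le_mul_of_nonneg_left b5 (by linarith : (0:ℝ) ≤ 1 - c)]
  intro n hn
  obtain ⟨C, hC0, hC1, hCb⟩ := main n hn
  have hop : ‖S ^ n - T ^ n‖ ≤ C := by
    apply ContinuousLinearMap.opNorm_le_bound _ hC0
    intro x
    obtain ⟨p, q, hp, hq, hpq, hnorm⟩ := hdecomp x
    have e : (S ^ n - T ^ n) x = (S ^ n - T ^ n) p - (S ^ n - T ^ n) q := by
      rw [hpq, map_sub]
    calc ‖(S ^ n - T ^ n) x‖ = ‖(S ^ n - T ^ n) p - (S ^ n - T ^ n) q‖ := by rw [e]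
      _ ≤ ‖(S ^ n - T ^ n) p‖ + ‖(S ^ n - T ^ n) q‖ := norm_sub_le _ _
      _ ≤ C * ‖p‖ + C * ‖q‖ := add_le_add (hCb p hp) (hCb q hq)
      _ = C * ‖x‖ := by rw [hnorm]; ring
  linarith
end

section
/- Consider ℝ² with the ℓ¹-norm. Define S(x₁,x₂) = (Ax₁ + Bx₂, Cx₁ + Dx₂) and T(x₁,x₂) = (λx₂, 0) with A, B, C, D, λ ≥ 0 and B + D ≤ A + C. Then T² = 0 and the operator norm of S² − T² = S² equals A² + AC + BC + DC. -/
private lemma l1norm' (x : PiLp 1 (fun _ : Fin 2 => ℝ)) : ‖x‖ = |x 0| + |x 1| := by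
  rw [PiLp.norm_eq_sum (by norm_num : 0 < (1:ENNReal).toReal)]
  simp [Fin.sum_univ_two, Real.norm_eq_abs]

/-- For `S(x₁,x₂) = (Ax₁ + Bx₂, Cx₁ + Dx₂)` and `T(x₁,x₂) = (λx₂, 0)` on `ℝ²` with the
`ℓ¹`-norm, with `A, B, C, D, λ ≥ 0` and `B + D ≤ A + C`, one has `T² = 0` and
`‖S² - T²‖ = A² + AC + BC + DC`. -/
theorem sq_T_eq_zero_and_opNorm_sq_sub
    (A B C D l : ℝ) (hA : 0 ≤ A) (hB : 0 ≤ B) (hC : 0 ≤ C) (hD : 0 ≤ D) (hl : 0 ≤ l)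
    (hBD : B + D ≤ A + C)
    (S T : PiLp 1 (fun _ : Fin 2 => ℝ) →L[ℝ] PiLp 1 (fun _ : Fin 2 => ℝ))
    (hS : ∀ x : PiLp 1 (fun _ : Fin 2 => ℝ),
      S x = (WithLp.equiv 1 (Fin 2 → ℝ)).symm ![A * x 0 + B * x 1, C * x 0 + D * x 1])
    (hT : ∀ x : PiLp 1 (fun _ : Fin 2 => ℝ),
      T x = (WithLp.equiv 1 (Fin 2 → ℝ)).symm ![l * x 1, 0]) :
    T ^ 2 = 0 ∧ ‖S ^ 2 - T ^ 2‖ = A ^ 2 + A * C + B * C + D * C := by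
  have hS0 : ∀ x : PiLp 1 (fun _ : Fin 2 => ℝ), (S x) 0 = A * x 0 + B * x 1 := by
    intro x; rw [hS]; rfl
  have hS1 : ∀ x : PiLp 1 (fun _ : Fin 2 => ℝ), (S x) 1 = C * x 0 + D * x 1 := by
    intro x; rw [hS]; rfl
  have hT0 : ∀ x : PiLp 1 (fun _ : Fin 2 => ℝ), (T x) 0 = l * x 1 := by
    intro x; rw [hT]; rfl
  have hT1 : ∀ x : PiLp 1 (fun _ : Fin 2 => ℝ), (T x) 1 = 0 := by
    intro x; rw [hT]; rfl
  have hTsq : T ^ 2 = 0 := by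
    ext x i
    have hx : (T ^ 2) x = T (T x) := by
      rw [pow_two]; rfl
    fin_cases i <;>
      simp [hx, hT0, hT1, ContinuousLinearMap.zero_apply]
  refine ⟨hTsq, ?_⟩
  rw [hTsq, sub_zero]
  have hSsq : ∀ x : PiLp 1 (fun _ : Fin 2 => ℝ),
      ((S ^ 2) x) 0 = (A * A + B * C) * x 0 + (A * B + B * D) * x 1 ∧
      ((S ^ 2) x) 1 = (C * A + D * C) * x 0 + (C * B + D * D) * x 1 := by
    intro x
    have hx : (S ^ 2) x = S (S x) := by rw [pow_two]; rfl
    rw [hx]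
    constructor
    · rw [hS0, hS0, hS1]; ring
    · rw [hS1, hS0, hS1]; ring
  have hc : C * B + D * D ≤ A * A + B * C + (C * A + D * C) - (A * B + B * D) := by
    nlinarith [mul_nonneg (sub_nonneg.mpr hBD) (by linarith : (0:ℝ) ≤ A + D)]
  apply le_antisymm
  · apply ContinuousLinearMap.opNorm_le_bound
    · nlinarith
    intro x
    rw [l1norm' ((S ^ 2) x), (hSsq x).1, (hSsq x).2, l1norm' x]
    have h0 := abs_nonneg (x 0)
    have h1 := abs_nonneg (x 1)
    have e0 : |(A * A + B * C) * x 0 + (A * B + B * D) * x 1| ≤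
        (A * A + B * C) * |x 0| + (A * B + B * D) * |x 1| := by
      calc _ ≤ |(A * A + B * C) * x 0| + |(A * B + B * D) * x 1| := abs_add_le _ _
        _ = _ := by
          rw [abs_mul, abs_mul,
            abs_of_nonneg (show (0:ℝ) ≤ A * A + B * C by positivity),
            abs_of_nonneg (show (0:ℝ) ≤ A * B + B * D by positivity)]
    have e1 : |(C * A + D * C) * x 0 + (C * B + D * D) * x 1| ≤
        (C * A + D * C) * |x 0| + (C * B + D * D) * |x 1| := by
      calc _ ≤ |(C * A + D * C) * x 0| + |(C * B + D * D) * x 1| := abs_add_le _ _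
        _ = _ := by
          rw [abs_mul, abs_mul,
            abs_of_nonneg (show (0:ℝ) ≤ C * A + D * C by positivity),
            abs_of_nonneg (show (0:ℝ) ≤ C * B + D * D by positivity)]
    nlinarith [mul_nonneg (sub_nonneg.mpr hc) h1]
  · set e : PiLp 1 (fun _ : Fin 2 => ℝ) := (WithLp.equiv 1 (Fin 2 → ℝ)).symm ![1, 0] with he
    have he0 : e 0 = 1 := rfl
    have he1 : e 1 = 0 := rfl
    have hne : ‖e‖ = 1 := by rw [l1norm', he0, he1]; norm_num
    have := (S ^ 2).le_opNorm e
    rw [hne, mul_one, l1norm' ((S ^ 2) e), (hSsq e).1, (hSsq e).2, he0, he1] at this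
    rw [abs_of_nonneg (by nlinarith), abs_of_nonneg (by nlinarith)] at this
    nlinarith [this]
end

section
/- Consider ℝ² with the ℓ¹-norm and coordinatewise order. Let S(x₁,x₂) = ((1/2)x₁ + (1/3)x₂, (1/2)x₁ + (1/3)x₂) and T(x₁,x₂) = ((1/4)x₂, 0). Then S and T are positive contractions, T ≤ S, ‖S − T‖ = 1, and ‖S² − T²‖ < 1. -/
/-!
All operators involved are given by nonnegative matrices, and the `ℓ¹` operator norm of a matrix
is its largest column `ℓ¹`-norm. The columns of `S - T` are `(1/2, 1/2)` and `(1/12, 1/3)`, while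
`T² = 0` and the columns of `S² = S² - T²` are `(5/12, 5/12)` and `(5/18, 5/18)`.
-/

namespace Matrix

variable {m n 𝕜 : Type*} [Fintype m] [Fintype n] [DecidableEq n] [NontriviallyNormedField 𝕜]

theorem norm_toLpLin_one_apply_le (M : Matrix m n 𝕜) {C : ℝ}
    (h : ∀ j, ∑ i, ‖M i j‖ ≤ C) (x : WithLp 1 (n → 𝕜)) :
    ‖toLpLin 1 1 M x‖ ≤ C * ‖x‖ := by
  calc ‖toLpLin 1 1 M x‖ = ∑ i, ‖∑ j, M i j * x j‖ := by
        simp [PiLp.norm_eq_of_L1, toLpLin_apply, mulVec, dotProduct]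
    _ ≤ ∑ i, ∑ j, ‖M i j‖ * ‖x j‖ := by
        gcongr with i
        exact (norm_sum_le _ _).trans_eq (by simp_rw [norm_mul])
    _ = ∑ j, (∑ i, ‖M i j‖) * ‖x j‖ := by rw [Finset.sum_comm]; simp_rw [Finset.sum_mul]
    _ ≤ ∑ j, C * ‖x j‖ := by gcongr with j; exact h j
    _ = C * ‖x‖ := by rw [← Finset.mul_sum, PiLp.norm_eq_of_L1]

theorem norm_toLpLin_one_single (M : Matrix m n 𝕜) (j : n) :
    ‖toLpLin 1 1 M (PiLp.single 1 j 1)‖ = ∑ i, ‖M i j‖ := by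
  rw [← PiLp.toLp_single, toLpLin_toLp, toLin'_apply, mulVec_single_one, PiLp.norm_eq_of_L1]
  rfl

variable (A : WithLp 1 (n → 𝕜) →L[𝕜] WithLp 1 (m → 𝕜)) (M : Matrix m n 𝕜)

theorem opNorm_le_of_col_sum_le (hA : ∀ x, A x = toLpLin 1 1 M x) {C : ℝ} (hC : 0 ≤ C)
    (h : ∀ j, ∑ i, ‖M i j‖ ≤ C) : ‖A‖ ≤ C :=
  A.opNorm_le_bound hC fun x => hA x ▸ M.norm_toLpLin_one_apply_le h x

theorem col_sum_le_opNorm (hA : ∀ x, A x = toLpLin 1 1 M x) (j : n) :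
    ∑ i, ‖M i j‖ ≤ ‖A‖ := by
  simpa [← M.norm_toLpLin_one_single, hA, PiLp.norm_single] using A.le_opNorm (PiLp.single 1 j 1)

end Matrix

theorem Matrix.toLpLin_apply_nonneg {m n : Type*} [Fintype n] [DecidableEq n] {p q : ENNReal}
    {M : Matrix m n ℝ} (hM : ∀ i j, 0 ≤ M i j) {x : WithLp p (n → ℝ)} (hx : ∀ j, 0 ≤ x j)
    (i : m) : 0 ≤ toLpLin p q M x i :=
  Finset.sum_nonneg fun j _ => mul_nonneg (hM i j) (hx j)

open Matrix in
/-- The concrete example: `S(x₁,x₂) = (x₁/2 + x₂/3, x₁/2 + x₂/3)`,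
`T(x₁,x₂) = (x₂/4, 0)` on `ℝ²` with the `ℓ¹`-norm. Then `S` and `T` are positive
contractions, `T ≤ S`, `‖S - T‖ = 1` and `‖S² - T²‖ < 1`. -/
theorem concrete_example
    (S T : PiLp 1 (fun _ : Fin 2 => ℝ) →L[ℝ] PiLp 1 (fun _ : Fin 2 => ℝ))
    (hS : ∀ x : PiLp 1 (fun _ : Fin 2 => ℝ),
      S x = (WithLp.equiv 1 (Fin 2 → ℝ)).symm
        ![(1 / 2) * x 0 + (1 / 3) * x 1, (1 / 2) * x 0 + (1 / 3) * x 1])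
    (hT : ∀ x : PiLp 1 (fun _ : Fin 2 => ℝ),
      T x = (WithLp.equiv 1 (Fin 2 → ℝ)).symm ![(1 / 4) * x 1, 0]) :
    (∀ x : PiLp 1 (fun _ : Fin 2 => ℝ), (∀ i, 0 ≤ x i) → ∀ i, 0 ≤ S x i) ∧ ‖S‖ ≤ 1 ∧
    (∀ x : PiLp 1 (fun _ : Fin 2 => ℝ), (∀ i, 0 ≤ x i) → ∀ i, 0 ≤ T x i) ∧ ‖T‖ ≤ 1 ∧
    (∀ x : PiLp 1 (fun _ : Fin 2 => ℝ), (∀ i, 0 ≤ x i) → ∀ i, 0 ≤ (S x - T x) i) ∧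
    ‖S - T‖ = 1 ∧ ‖S ^ 2 - T ^ 2‖ < 1 := by
  set M : Matrix (Fin 2) (Fin 2) ℝ := !![1/2, 1/3; 1/2, 1/3]
  set N : Matrix (Fin 2) (Fin 2) ℝ := !![0, 1/4; 0, 0]
  have hSM : ∀ x, S x = toLpLin 1 1 M x := by
    intro x; ext i; fin_cases i <;> simp [hS, M, toLpLin_apply, dotProduct, Fin.sum_univ_two]
  have hTN : ∀ x, T x = toLpLin 1 1 N x := by
    intro x; ext i; fin_cases i <;> simp [hT, N, toLpLin_apply, dotProduct, Fin.sum_univ_two]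
  have hST : ∀ x, (S - T) x = toLpLin 1 1 !![1/2, 1/12; 1/2, 1/3] x := by
    have : M - N = !![1/2, 1/12; 1/2, 1/3] := by
      ext i j; fin_cases i <;> fin_cases j <;> norm_num [M, N]
    intro x; rw [← this, map_sub, LinearMap.sub_apply, ← hSM, ← hTN]; rfl
  have hST2 : ∀ x, (S ^ 2 - T ^ 2) x = toLpLin 1 1 !![5/12, 5/18; 5/12, 5/18] x := by
    have : M ^ 2 - N ^ 2 = !![5/12, 5/18; 5/12, 5/18] := by
      ext i j; fin_cases i <;> fin_cases j <;> norm_num [M, N, sq, mul_fin_two]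
    intro x
    rw [← this, map_sub, LinearMap.sub_apply, toLpLin_pow, toLpLin_pow]
    simp only [sq, Module.End.mul_apply, ← hSM, ← hTN]
    rfl
  have hM : ∀ i j, 0 ≤ M i j := by norm_num [Fin.forall_fin_two, M]
  have hN : ∀ i j, 0 ≤ N i j := by norm_num [Fin.forall_fin_two, N]
  refine ⟨fun x hx => hSM x ▸ toLpLin_apply_nonneg hM hx,
    opNorm_le_of_col_sum_le S M hSM zero_le_one (by norm_num [Fin.forall_fin_two, M]),
    fun x hx => hTN x ▸ toLpLin_apply_nonneg hN hx,
    opNorm_le_of_col_sum_le T N hTN zero_le_one (by norm_num [Fin.forall_fin_two, N]),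
    fun x hx => show ∀ i, 0 ≤ (S - T) x i from
      hST x ▸ toLpLin_apply_nonneg (by norm_num [Fin.forall_fin_two]) hx,
    le_antisymm (opNorm_le_of_col_sum_le _ _ hST zero_le_one (by norm_num [Fin.forall_fin_two]))
      ((col_sum_le_opNorm _ _ hST 0).trans_eq' (by norm_num)),
    (opNorm_le_of_col_sum_le (C := 5/6) _ _ hST2 (by norm_num)
      (by norm_num [Fin.forall_fin_two])).trans_lt (by norm_num)⟩
end

section
/- Let T, S be positive contractions on the real L¹-space L¹(μ) with T ≤ S. Suppose x ≥ 0, ‖x‖ = 1, m ≥ 1, n₀ ≥ 1. Then ‖S^{n₀}(T^m x)‖ ≥ ‖S^{n₀+m} x‖ − ‖S^m x‖ + ‖T^m x‖. -/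
open MeasureTheory

/-- For a nonnegative element of real `L¹`, the norm is the integral. -/
lemma norm_eq_integral_of_nonneg {X : Type*} [MeasurableSpace X] {μ : Measure X}
    (f : Lp ℝ 1 μ) (hf : 0 ≤ f) : ‖f‖ = ∫ a, f a ∂μ := by
  rw [L1.norm_eq_integral_norm]
  refine integral_congr_ae ?_
  filter_upwards [(Lp.coeFn_nonneg f).2 hf] with a ha
  exact Real.norm_of_nonneg ha

/-- Norm is additive on nonnegative elements of real `L¹`. -/
lemma norm_add_of_nonneg {X : Type*} [MeasurableSpace X] {μ : Measure X}
    (f g : Lp ℝ 1 μ) (hf : 0 ≤ f) (hg : 0 ≤ g) : ‖f + g‖ = ‖f‖ + ‖g‖ := by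
  rw [norm_eq_integral_of_nonneg f hf, norm_eq_integral_of_nonneg g hg,
    norm_eq_integral_of_nonneg (f + g) (add_nonneg hf hg)]
  rw [← integral_add (L1.integrable_coeFn f) (L1.integrable_coeFn g)]
  exact integral_congr_ae (Lp.coeFn_add f g)

/-- Key estimate in the proof of the main theorem: for positive contractions `T ≤ S`
on the real `L¹`-space and a positive norm-one `x`,
`‖S^{n₀}(T^m x)‖ ≥ ‖S^{n₀+m} x‖ - ‖S^m x‖ + ‖T^m x‖`. -/
theorem key_estimate
    {X : Type*} [MeasurableSpace X] (μ : Measure X)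
    (T S : Lp ℝ 1 μ →L[ℝ] Lp ℝ 1 μ)
    (hT : ∀ x : Lp ℝ 1 μ, 0 ≤ x → 0 ≤ T x) (hTnorm : ‖T‖ ≤ 1)
    (hS : ∀ x : Lp ℝ 1 μ, 0 ≤ x → 0 ≤ S x) (hSnorm : ‖S‖ ≤ 1)
    (hTS : ∀ x : Lp ℝ 1 μ, 0 ≤ x → 0 ≤ S x - T x)
    (x : Lp ℝ 1 μ) (hx : 0 ≤ x) (hx1 : ‖x‖ = 1)
    (m n₀ : ℕ) (hm : 1 ≤ m) (hn₀ : 1 ≤ n₀) :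
    ‖(S ^ n₀) ((T ^ m) x)‖ ≥ ‖(S ^ (n₀ + m)) x‖ - ‖(S ^ m) x‖ + ‖(T ^ m) x‖ := by
  -- powers preserve positivity
  have hTpow : ∀ k : ℕ, ∀ y : Lp ℝ 1 μ, 0 ≤ y → 0 ≤ (T ^ k) y := by
    intro k
    induction k with
    | zero => intro y hy; simpa using hy
    | succ n ih =>
      intro y hy
      rw [pow_succ]
      exact ih _ (hT y hy)
  have hSpow : ∀ k : ℕ, ∀ y : Lp ℝ 1 μ, 0 ≤ y → 0 ≤ (S ^ k) y := by
    intro k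
    induction k with
    | zero => intro y hy; simpa using hy
    | succ n ih =>
      intro y hy
      rw [pow_succ]
      exact ih _ (hS y hy)
  -- S^k - T^k is positive
  have hdiff : ∀ k : ℕ, ∀ y : Lp ℝ 1 μ, 0 ≤ y → 0 ≤ (S ^ k) y - (T ^ k) y := by
    intro k
    induction k with
    | zero => intro y hy; simp
    | succ n ih =>
      intro y hy
      have h1 : 0 ≤ (S ^ n) (S y) - (S ^ n) (T y) := by
        have := hSpow n (S y - T y) (hTS y hy)
        simpa [map_sub] using this
      have h2 : 0 ≤ (S ^ n) (T y) - (T ^ n) (T y) := ih (T y) (hT y hy)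
      have h3 := add_nonneg h1 h2
      rw [sub_add_sub_cancel] at h3
      rw [pow_succ, pow_succ]
      simpa [ContinuousLinearMap.mul_apply] using h3
  -- norm contraction for S^k
  have hSnormpow : ∀ (k : ℕ) (y : Lp ℝ 1 μ), ‖(S ^ k) y‖ ≤ ‖y‖ := by
    intro k
    induction k with
    | zero => intro y; simp
    | succ n ih =>
      intro y
      rw [pow_succ, ContinuousLinearMap.mul_apply]
      calc ‖(S ^ n) (S y)‖ ≤ ‖S y‖ := ih (S y)
        _ ≤ ‖S‖ * ‖y‖ := S.le_opNorm y
        _ ≤ 1 * ‖y‖ := mul_le_mul_of_nonneg_right hSnorm (norm_nonneg y)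
        _ = ‖y‖ := one_mul _
  set a := (S ^ n₀) ((T ^ m) x) with ha
  set d := (S ^ m) x - (T ^ m) x with hd
  have hd0 : 0 ≤ d := hdiff m x hx
  have ha0 : 0 ≤ a := hSpow n₀ _ (hTpow m x hx)
  have hb0 : 0 ≤ (S ^ n₀) d := hSpow n₀ _ hd0
  -- S^{n₀+m} x = a + S^{n₀} d
  have hsplit : (S ^ (n₀ + m)) x = a + (S ^ n₀) d := by
    rw [hd, map_sub, ha, pow_add, ContinuousLinearMap.mul_apply]
    abel
  have h1 : ‖(S ^ (n₀ + m)) x‖ = ‖a‖ + ‖(S ^ n₀) d‖ := by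
    rw [hsplit]; exact norm_add_of_nonneg _ _ ha0 hb0
  have h2 : ‖(S ^ m) x‖ = ‖(T ^ m) x‖ + ‖d‖ := by
    have : (S ^ m) x = (T ^ m) x + d := by rw [hd]; abel
    rw [this]
    exact norm_add_of_nonneg _ _ (hTpow m x hx) hd0
  have h3 : ‖(S ^ n₀) d‖ ≤ ‖d‖ := hSnormpow n₀ d
  rw [h1, h2]
  linarith
end

section
/- Let T, S : L¹(μ) → L¹(μ) be positive contractions with T ≤ S, and suppose ‖S^{n₀} − T^{n₀}‖ < 1 for some n₀ ∈ ℕ. Then for every k ∈ ℕ with k ≥ 1, ‖S^{k n₀} − T^{k n₀}‖ < 1. -/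
open MeasureTheory

section Aux

variable {X : Type*} [MeasurableSpace X] {μ : Measure X}

/-- For a nonnegative element of `L¹`, the integral equals the norm. -/
lemma integral_eq_norm_of_nonneg {f : Lp ℝ 1 μ} (hf : 0 ≤ f) :
    L1.integral f = ‖f‖ := by
  rw [L1.integral_eq_integral, L1.norm_eq_integral_norm]
  refine integral_congr_ae ?_
  filter_upwards [(Lp.coeFn_nonneg f).mpr hf] with a ha
  exact (Real.norm_of_nonneg ha).symm

lemma L1integral_nonneg {f : Lp ℝ 1 μ} (hf : 0 ≤ f) : 0 ≤ L1.integral f := by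
  rw [integral_eq_norm_of_nonneg hf]; exact norm_nonneg f

/-- If a positive operator satisfies `‖P x‖ ≤ c * ‖x‖` on nonnegative elements,
then `‖P‖ ≤ c`. -/
lemma opNorm_le_of_nonneg (P : Lp ℝ 1 μ →L[ℝ] Lp ℝ 1 μ) {c : ℝ} (hc : 0 ≤ c)
    (h : ∀ x : Lp ℝ 1 μ, 0 ≤ x → ‖P x‖ ≤ c * ‖x‖) : ‖P‖ ≤ c := by
  refine ContinuousLinearMap.opNorm_le_bound P hc fun x => ?_
  have hu : (0 : Lp ℝ 1 μ) ≤ x⁺ := posPart_nonneg x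
  have hv : (0 : Lp ℝ 1 μ) ≤ x⁻ := negPart_nonneg x
  have hx : ‖x‖ = ‖x⁺‖ + ‖x⁻‖ := by
    have h1 : ‖x‖ = ‖|x|‖ := (norm_abs_eq_norm x).symm
    have h2 : |x| = x⁺ + x⁻ := (posPart_add_negPart x).symm
    have h3 : ‖x⁺ + x⁻‖ = ‖x⁺‖ + ‖x⁻‖ := by
      rw [← integral_eq_norm_of_nonneg (add_nonneg hu hv), L1.integral_add,
        integral_eq_norm_of_nonneg hu, integral_eq_norm_of_nonneg hv]
    rw [h1, h2, h3]
  have hdx : P x = P x⁺ - P x⁻ := by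
    rw [← map_sub]; congr 1; exact (posPart_sub_negPart x).symm
  calc ‖P x‖ = ‖P x⁺ - P x⁻‖ := by rw [hdx]
    _ ≤ ‖P x⁺‖ + ‖P x⁻‖ := norm_sub_le _ _
    _ ≤ c * ‖x⁺‖ + c * ‖x⁻‖ := add_le_add (h _ hu) (h _ hv)
    _ = c * ‖x‖ := by rw [hx]; ring

/-- Powers of a positive operator are positive. -/
lemma norm_pow_le_one {B : Lp ℝ 1 μ →L[ℝ] Lp ℝ 1 μ} (hB : ‖B‖ ≤ 1) (n : ℕ) :
    ‖B ^ n‖ ≤ 1 := by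
  induction n with
  | zero => rw [pow_zero, ContinuousLinearMap.one_def]; exact ContinuousLinearMap.norm_id_le
  | succ n ih =>
    calc ‖B ^ (n + 1)‖ = ‖B ^ n * B‖ := by rw [pow_succ]
      _ ≤ ‖B ^ n‖ * ‖B‖ := norm_mul_le _ _
      _ ≤ 1 * 1 := mul_le_mul ih hB (norm_nonneg B) zero_le_one
      _ = 1 := one_mul 1

/-- Powers of a positive operator are positive. -/
lemma pow_pos_of_pos {B : Lp ℝ 1 μ →L[ℝ] Lp ℝ 1 μ}
    (hB : ∀ x : Lp ℝ 1 μ, 0 ≤ x → 0 ≤ B x) (n : ℕ) :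
    ∀ x : Lp ℝ 1 μ, 0 ≤ x → 0 ≤ (B ^ n) x := by
  induction n with
  | zero => intro x hx; simpa using hx
  | succ n ih =>
    intro x hx
    have : (B ^ (n + 1)) x = B ((B ^ n) x) := by
      rw [pow_succ']; rfl
    rw [this]
    exact hB _ (ih x hx)

/-- `Aⁿ - Bⁿ` is a positive operator when `0 ≤ B ≤ A`. -/
lemma pow_sub_pow_pos {A B : Lp ℝ 1 μ →L[ℝ] Lp ℝ 1 μ}
    (hA : ∀ x : Lp ℝ 1 μ, 0 ≤ x → 0 ≤ A x)
    (hB : ∀ x : Lp ℝ 1 μ, 0 ≤ x → 0 ≤ B x)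
    (hAB : ∀ x : Lp ℝ 1 μ, 0 ≤ x → 0 ≤ A x - B x) (n : ℕ) :
    ∀ x : Lp ℝ 1 μ, 0 ≤ x → 0 ≤ (A ^ n) x - (B ^ n) x := by
  induction n with
  | zero => intro x hx; simp
  | succ n ih =>
    intro x hx
    have key : (A ^ (n + 1)) x - (B ^ (n + 1)) x
        = A ((A ^ n) x - (B ^ n) x) + (A ((B ^ n) x) - B ((B ^ n) x)) := by
      have h1 : (A ^ (n + 1)) x = A ((A ^ n) x) := by rw [pow_succ']; rfl
      have h2 : (B ^ (n + 1)) x = B ((B ^ n) x) := by rw [pow_succ']; rfl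
      rw [h1, h2, map_sub]; abel
    rw [key]
    exact add_nonneg (hA _ (ih x hx)) (hAB _ (pow_pos_of_pos hB n x hx))

/-- Main quantitative estimate: for positive contractions `B ≤ A` on `L¹`,
`∫ (Aⁿ - Bⁿ) x ≤ (1 - (1 - ‖A - B‖)ⁿ) ∫ x` for nonnegative `x`. -/
lemma key_integral_bound {A B : Lp ℝ 1 μ →L[ℝ] Lp ℝ 1 μ}
    (hA : ∀ x : Lp ℝ 1 μ, 0 ≤ x → 0 ≤ A x) (hAnorm : ‖A‖ ≤ 1)
    (hB : ∀ x : Lp ℝ 1 μ, 0 ≤ x → 0 ≤ B x) (_hBnorm : ‖B‖ ≤ 1)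
    (hAB : ∀ x : Lp ℝ 1 μ, 0 ≤ x → 0 ≤ A x - B x) (hδ1 : ‖A - B‖ ≤ 1) (n : ℕ) :
    ∀ x : Lp ℝ 1 μ, 0 ≤ x →
      L1.integral ((A ^ n) x - (B ^ n) x) ≤ (1 - (1 - ‖A - B‖) ^ n) * L1.integral x := by
  set δ := ‖A - B‖ with hδ
  have hδ0 : 0 ≤ δ := norm_nonneg _
  induction n with
  | zero => intro x hx; simp
  | succ n ih =>
    intro x hx
    set y := (A ^ n) x - (B ^ n) x with hy
    set z := (B ^ n) x with hz
    have hy0 : 0 ≤ y := pow_sub_pow_pos hA hB hAB n x hx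
    have hz0 : 0 ≤ z := pow_pos_of_pos hB n x hx
    have key : (A ^ (n + 1)) x - (B ^ (n + 1)) x = A y + (A z - B z) := by
      have h1 : (A ^ (n + 1)) x = A ((A ^ n) x) := by rw [pow_succ']; rfl
      have h2 : (B ^ (n + 1)) x = B ((B ^ n) x) := by rw [pow_succ']; rfl
      rw [h1, h2, hy, hz, map_sub]; abel
    -- I (A y) ≤ I y
    have hAy0 : 0 ≤ A y := hA _ hy0
    have bound1 : L1.integral (A y) ≤ L1.integral y := by
      rw [integral_eq_norm_of_nonneg hAy0, integral_eq_norm_of_nonneg hy0]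
      calc ‖A y‖ ≤ ‖A‖ * ‖y‖ := A.le_opNorm y
        _ ≤ 1 * ‖y‖ := mul_le_mul_of_nonneg_right hAnorm (norm_nonneg y)
        _ = ‖y‖ := one_mul _
    -- I (A z - B z) ≤ δ * I z
    have hABz0 : 0 ≤ A z - B z := hAB _ hz0
    have bound2 : L1.integral (A z - B z) ≤ δ * L1.integral z := by
      rw [integral_eq_norm_of_nonneg hABz0, integral_eq_norm_of_nonneg hz0]
      have : A z - B z = (A - B) z := by simp
      rw [this]
      exact (A - B).le_opNorm z
    -- I z ≤ I x - I y
    have bound3 : L1.integral z ≤ L1.integral x - L1.integral y := by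
      have hsum : y + z = (A ^ n) x := by rw [hy, hz]; abel
      have hAnx : L1.integral ((A ^ n) x) ≤ L1.integral x := by
        rw [integral_eq_norm_of_nonneg (pow_pos_of_pos hA n x hx),
          integral_eq_norm_of_nonneg hx]
        calc ‖(A ^ n) x‖ ≤ ‖A ^ n‖ * ‖x‖ := (A ^ n).le_opNorm x
          _ ≤ 1 * ‖x‖ := mul_le_mul_of_nonneg_right (norm_pow_le_one hAnorm n) (norm_nonneg x)
          _ = ‖x‖ := one_mul _
      have : L1.integral y + L1.integral z = L1.integral ((A ^ n) x) := by
        rw [← L1.integral_add, hsum]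
      linarith
    have ihy : L1.integral y ≤ (1 - (1 - δ) ^ n) * L1.integral x := ih x hx
    have hIy0 : 0 ≤ L1.integral y := L1integral_nonneg hy0
    have hIz0 : 0 ≤ L1.integral z := L1integral_nonneg hz0
    have hIx0 : 0 ≤ L1.integral x := L1integral_nonneg hx
    have hsplit : L1.integral ((A ^ (n + 1)) x - (B ^ (n + 1)) x)
        = L1.integral (A y) + L1.integral (A z - B z) := by
      rw [key, L1.integral_add]
    rw [hsplit]
    have hpow : (0:ℝ) ≤ (1 - δ) ^ n ∨ True := Or.inr trivial
    -- combine
    have goal : L1.integral (A y) + L1.integral (A z - B z)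
        ≤ L1.integral y + δ * (L1.integral x - L1.integral y) := by
      have := mul_le_mul_of_nonneg_left bound3 hδ0
      linarith
    calc L1.integral (A y) + L1.integral (A z - B z)
        ≤ L1.integral y + δ * (L1.integral x - L1.integral y) := goal
      _ = δ * L1.integral x + (1 - δ) * L1.integral y := by ring
      _ ≤ (1 - (1 - δ) ^ (n + 1)) * L1.integral x := by
          have hmul : (1 - δ) * L1.integral y
              ≤ (1 - δ) * ((1 - (1 - δ) ^ n) * L1.integral x) :=
            mul_le_mul_of_nonneg_left ihy (by linarith)
          rw [pow_succ]
          nlinarith [hmul]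

/-- Zaharopol's theorem, quantitative form. -/
lemma zaharopol {A B : Lp ℝ 1 μ →L[ℝ] Lp ℝ 1 μ}
    (hA : ∀ x : Lp ℝ 1 μ, 0 ≤ x → 0 ≤ A x) (hAnorm : ‖A‖ ≤ 1)
    (hB : ∀ x : Lp ℝ 1 μ, 0 ≤ x → 0 ≤ B x) (hBnorm : ‖B‖ ≤ 1)
    (hAB : ∀ x : Lp ℝ 1 μ, 0 ≤ x → 0 ≤ A x - B x)
    (h : ‖A - B‖ < 1) (n : ℕ) : ‖A ^ n - B ^ n‖ < 1 := by
  set δ := ‖A - B‖ with hδ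
  have hδ0 : 0 ≤ δ := norm_nonneg _
  have hpow0 : 0 < (1 - δ) ^ n := pow_pos (by linarith) n
  have hpow1 : (1 - δ) ^ n ≤ 1 := pow_le_one₀ (by linarith) (by linarith)
  have hnorm : ‖A ^ n - B ^ n‖ ≤ 1 - (1 - δ) ^ n := by
    apply opNorm_le_of_nonneg _ (by linarith)
    intro x hx
    have hpos : 0 ≤ (A ^ n) x - (B ^ n) x := pow_sub_pow_pos hA hB hAB n x hx
    have : (A ^ n - B ^ n) x = (A ^ n) x - (B ^ n) x := by simp
    rw [this, ← integral_eq_norm_of_nonneg hpos, ← integral_eq_norm_of_nonneg hx]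
    exact key_integral_bound hA hAnorm hB hBnorm hAB h.le n x hx
  linarith

end Aux

/-- Consequence of Zaharopol's theorem applied to `S^{n₀}`, `T^{n₀}`: if
`‖S^{n₀} - T^{n₀}‖ < 1` then `‖S^{k n₀} - T^{k n₀}‖ < 1` for every `k ≥ 1`. -/
theorem norm_pow_mul_sub_pow_mul_lt_one
    {X : Type*} [MeasurableSpace X] (μ : Measure X)
    (T S : Lp ℝ 1 μ →L[ℝ] Lp ℝ 1 μ)
    (hT : ∀ x : Lp ℝ 1 μ, 0 ≤ x → 0 ≤ T x) (hTnorm : ‖T‖ ≤ 1)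
    (hS : ∀ x : Lp ℝ 1 μ, 0 ≤ x → 0 ≤ S x) (hSnorm : ‖S‖ ≤ 1)
    (hTS : ∀ x : Lp ℝ 1 μ, 0 ≤ x → 0 ≤ S x - T x)
    (n₀ : ℕ) (hn₀ : 1 ≤ n₀) (h : ‖S ^ n₀ - T ^ n₀‖ < 1) :
    ∀ k : ℕ, 1 ≤ k → ‖S ^ (k * n₀) - T ^ (k * n₀)‖ < 1 := by
  intro k _hk
  have hA : ∀ x : Lp ℝ 1 μ, 0 ≤ x → 0 ≤ (S ^ n₀) x := pow_pos_of_pos hS n₀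
  have hB : ∀ x : Lp ℝ 1 μ, 0 ≤ x → 0 ≤ (T ^ n₀) x := pow_pos_of_pos hT n₀
  have hAnorm : ‖S ^ n₀‖ ≤ 1 := norm_pow_le_one hSnorm n₀
  have hBnorm : ‖T ^ n₀‖ ≤ 1 := norm_pow_le_one hTnorm n₀
  have hAB : ∀ x : Lp ℝ 1 μ, 0 ≤ x → 0 ≤ (S ^ n₀) x - (T ^ n₀) x :=
    pow_sub_pow_pos hS hT hTS n₀
  have := zaharopol hA hAnorm hB hBnorm hAB h k
  have heq : S ^ (k * n₀) = (S ^ n₀) ^ k := by rw [mul_comm, pow_mul]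
  have heq' : T ^ (k * n₀) = (T ^ n₀) ^ k := by rw [mul_comm, pow_mul]
  rwa [heq, heq']
end
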